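/- arXiv:1412.5553 — 3 statements merged into one kernel-verified Lean document; each statement's English description precedes it below -/
import Mathlib

section
/- Let G be an irreducible rate matrix on the finite state space 𝒳 = {1,…,d} and let p(·), q(·) : [0,∞) → 𝒫(𝒳) be solutions of the linear forward equation r'(t) = r(t)G with initial conditions p(0), q(0) ∈ 𝒫(𝒳). Then for every t > 0 all components of p(t) and q(t) are strictly positive, and d/dt R(p(t)‖q(t)) = − Σ_{x,y ∈ 𝒳, x ≠ y} ℓ( p_y(t) q_x(t) / (p_x(t) q_y(t)) ) · p_x(t) · (q_y(t)/q_x(t)) · G_{y,x} ≤ 0, where ℓ(z) = z log z − z + 1. -/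
open scoped BigOperators

/-- Relative entropy `R(p‖q) = ∑ x, p x * log (p x / q x)` of probability
vectors on `Fin d` (with the convention `0 log 0 = 0`, as given by Lean's
`Real.log 0 = 0` and `x / 0 = 0`). -/
noncomputable def relEnt {d : ℕ} (p q : Fin d → ℝ) : ℝ :=
  ∑ x, p x * Real.log (p x / q x)

/-- `G` is a rate matrix: nonnegative off-diagonal entries and zero row sums. -/
def IsRateMatrix {d : ℕ} (G : Matrix (Fin d) (Fin d) ℝ) : Prop :=
  (∀ x y, x ≠ y → 0 ≤ G x y) ∧ (∀ x, ∑ y, G x y = 0)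

/-- `G` is irreducible: the directed graph with an edge from `x` to `y`
whenever `x ≠ y` and `G x y > 0` is strongly connected. -/
def IsIrreducibleRateMatrix {d : ℕ} (G : Matrix (Fin d) (Fin d) ℝ) : Prop :=
  ∀ x y : Fin d, x ≠ y → Relation.TransGen (fun a b => a ≠ b ∧ 0 < G a b) x y

/-- `p` solves the linear forward equation `r'(t) = r(t) G` on `[0,∞)`,
with values in the simplex of probability vectors. -/
def SolvesForwardEquation {d : ℕ} (G : Matrix (Fin d) (Fin d) ℝ)
    (p : ℝ → Fin d → ℝ) : Prop :=
  (∀ t : ℝ, 0 ≤ t → p t ∈ stdSimplex ℝ (Fin d)) ∧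
  (∀ t : ℝ, 0 ≤ t → ∀ x, HasDerivAt (fun s => p s x) (∑ y, p t y * G y x) t)

/-- The function `ℓ(z) = z log z - z + 1`. -/
noncomputable def ell (z : ℝ) : ℝ := z * Real.log z - z + 1

/-!
Positivity: the forward equation reads `p_x' = G_xx p_x + ∑_{y ≠ x} p_y G_yx` with a nonnegative
inflow term, so `p_x(t) e^{-G_xx t}` is nondecreasing, and strictly increasing as soon as some
`p_y` with `G_yx > 0` is positive. Hence positivity propagates from a state with positive mass at time `0`
along paths of the rate graph, which by irreducibility reach every state.

Descent: along the flow, `d/dt R(p‖q) = ∑_x (pG)_x log (p_x / q_x) - p_x (qG)_x / q_x` because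
`∑_x (pG)_x = 0`. Since `ℓ(z) w = p_y log z - p_y + w` for `z = p_y q_x / (p_x q_y)` and
`w = p_x q_y / q_x`, the entropy production expands, again by the zero row sums of `G`, into
minus the same sum, and `ℓ ≥ 0` gives the sign.
-/

open Finset Real
open scoped Matrix

section IntegratingFactor

variable {f g : ℝ → ℝ} {c s : ℝ}

theorem hasDerivAt_mul_exp_neg_mul {u : ℝ} (hf : HasDerivAt f (c * f u + g u) u) :
    HasDerivAt (fun v => f v * exp (-(c * v))) (exp (-(c * u)) * g u) u := by
  have hexp : HasDerivAt (fun v => exp (-(c * v))) (exp (-(c * u)) * -c) u := by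
    simpa using ((hasDerivAt_id u).const_mul c).neg.exp
  exact (hf.fun_mul hexp).congr_deriv (by ring)

theorem monotoneOn_mul_exp_neg_mul (hf : ∀ u ∈ Set.Ici s, HasDerivAt f (c * f u + g u) u)
    (hg : ∀ u ∈ Set.Ici s, 0 ≤ g u) : MonotoneOn (fun u => f u * exp (-(c * u))) (Set.Ici s) := by
  have hF := fun u hu => hasDerivAt_mul_exp_neg_mul (hf u hu)
  refine monotoneOn_of_deriv_nonneg (convex_Ici s)
    (fun u hu => (hF u hu).continuousAt.continuousWithinAt)
    (fun u hu => (hF u (interior_subset hu)).differentiableAt.differentiableWithinAt)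
    fun u hu => ?_
  rw [(hF u (interior_subset hu)).deriv]
  exact mul_nonneg (exp_pos _).le (hg u (interior_subset hu))

theorem strictMonoOn_mul_exp_neg_mul (hf : ∀ u ∈ Set.Ici s, HasDerivAt f (c * f u + g u) u)
    (hg : ∀ u ∈ Set.Ioi s, 0 < g u) : StrictMonoOn (fun u => f u * exp (-(c * u))) (Set.Ici s) := by
  have hF := fun u hu => hasDerivAt_mul_exp_neg_mul (hf u hu)
  refine strictMonoOn_of_deriv_pos (convex_Ici s)
    (fun u hu => (hF u hu).continuousAt.continuousWithinAt) fun u hu => ?_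
  rw [interior_Ici] at hu
  rw [(hF u (Set.Ioi_subset_Ici_self hu)).deriv]
  exact mul_pos (exp_pos _) (hg u hu)

end IntegratingFactor

namespace SolvesForwardEquation

variable {d : ℕ} {G : Matrix (Fin d) (Fin d) ℝ} {p : ℝ → Fin d → ℝ}

theorem hasDerivAt_apply_eq (hp : SolvesForwardEquation G p) {u : ℝ} (hu : 0 ≤ u) (x : Fin d) :
    HasDerivAt (fun v => p v x) (G x x * p u x + ∑ y ∈ univ.erase x, p u y * G y x) u := by
  convert hp.2 u hu x using 1
  rw [← add_sum_erase _ _ (mem_univ x), mul_comm]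

theorem inflow_nonneg (hG : IsRateMatrix G) (hp : SolvesForwardEquation G p) {u : ℝ}
    (hu : 0 ≤ u) (x : Fin d) : 0 ≤ ∑ y ∈ univ.erase x, p u y * G y x :=
  sum_nonneg fun y hy => mul_nonneg ((hp.1 u hu).1 y) (hG.1 y x (ne_of_mem_erase hy))

theorem pos_of_le (hG : IsRateMatrix G) (hp : SolvesForwardEquation G p) {s : ℝ}
    (hs : 0 ≤ s) {x : Fin d} (hx : 0 < p s x) {t : ℝ} (hst : s ≤ t) : 0 < p t x := by
  have hmono := monotoneOn_mul_exp_neg_mul (s := s)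
    (fun u hu => hp.hasDerivAt_apply_eq (hs.trans hu) x)
    (fun u hu => hp.inflow_nonneg hG (hs.trans hu) x) Set.self_mem_Ici hst hst
  exact pos_of_mul_pos_left ((mul_pos hx (exp_pos _)).trans_le hmono) (exp_pos _).le

theorem pos_of_rate_pos (hG : IsRateMatrix G) (hp : SolvesForwardEquation G p) {s : ℝ}
    (hs : 0 ≤ s) {x y : Fin d} (hyx : y ≠ x) (hGyx : 0 < G y x)
    (hy : ∀ u ∈ Set.Ioi s, 0 < p u y) {t : ℝ} (hst : s < t) : 0 < p t x := by
  have hinflow : ∀ u ∈ Set.Ioi s, 0 < ∑ z ∈ univ.erase x, p u z * G z x := fun u hu =>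
    sum_pos' (fun z hz => mul_nonneg ((hp.1 u (hs.trans hu.out.le)).1 z)
        (hG.1 z x (ne_of_mem_erase hz)))
      ⟨y, mem_erase.2 ⟨hyx, mem_univ y⟩, mul_pos (hy u hu) hGyx⟩
  have hmono := strictMonoOn_mul_exp_neg_mul (s := s)
    (fun u hu => hp.hasDerivAt_apply_eq (hs.trans hu) x) hinflow Set.self_mem_Ici hst.le hst
  have h0 : 0 ≤ p s x * exp (-(G x x * s)) := mul_nonneg ((hp.1 s hs).1 x) (exp_pos _).le
  exact pos_of_mul_pos_left (h0.trans_lt hmono) (exp_pos _).le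

theorem pos_of_reflTransGen (hG : IsRateMatrix G) (hp : SolvesForwardEquation G p) {s : ℝ}
    (hs : 0 ≤ s) {x₀ x : Fin d} (hx₀ : 0 < p s x₀)
    (hpath : Relation.ReflTransGen (fun a b => a ≠ b ∧ 0 < G a b) x₀ x) :
    ∀ t ∈ Set.Ioi s, 0 < p t x := by
  induction hpath with
  | refl => exact fun t ht => hp.pos_of_le hG hs hx₀ ht.out.le
  | tail _ hedge ih => exact fun t ht => hp.pos_of_rate_pos hG hs hedge.1 hedge.2 ih ht

theorem pos (hG : IsRateMatrix G) (hGirr : IsIrreducibleRateMatrix G)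
    (hp : SolvesForwardEquation G p) {t : ℝ} (ht : 0 < t) (x : Fin d) : 0 < p t x := by
  obtain ⟨x₀, -, hx₀⟩ : ∃ x₀ ∈ univ, (0 : ℝ) < p 0 x₀ :=
    exists_lt_of_sum_lt (by simp [(hp.1 0 le_rfl).2])
  have hpath : Relation.ReflTransGen (fun a b => a ≠ b ∧ 0 < G a b) x₀ x := by
    rcases eq_or_ne x₀ x with rfl | hne
    · exact .refl
    · exact (hGirr x₀ x hne).to_reflTransGen
  exact hp.pos_of_reflTransGen hG le_rfl hx₀ hpath t ht

end SolvesForwardEquation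

theorem ell_one : ell 1 = 0 := by simp [ell]

theorem ell_nonneg {z : ℝ} (hz : 0 ≤ z) : 0 ≤ ell z := by
  unfold ell
  linarith [self_sub_one_le_mul_log hz]

theorem ell_mul_eq {a₁ a₂ b₁ b₂ : ℝ} (ha₁ : 0 < a₁) (ha₂ : 0 < a₂) (hb₁ : 0 < b₁)
    (hb₂ : 0 < b₂) :
    ell (a₂ * b₁ / (a₁ * b₂)) * (a₁ * (b₂ / b₁)) =
      a₂ * (log (a₂ / b₂) - log (a₁ / b₁)) - a₂ + a₁ * b₂ / b₁ := by
  have hratio : a₂ * b₁ / (a₁ * b₂) = (a₂ / b₂) / (a₁ / b₁) := by field_simp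
  rw [ell, hratio, log_div (by positivity) (by positivity)]
  field_simp

theorem hasDerivAt_relEnt {d : ℕ} {a b : ℝ → Fin d → ℝ} {a' b' : Fin d → ℝ} {t : ℝ}
    (ha : ∀ x, HasDerivAt (fun s => a s x) (a' x) t)
    (hb : ∀ x, HasDerivAt (fun s => b s x) (b' x) t)
    (ha₀ : ∀ x, 0 < a t x) (hb₀ : ∀ x, 0 < b t x) :
    HasDerivAt (fun s => relEnt (a s) (b s))
      (∑ x, (a' x * log (a t x / b t x) + a' x - a t x * b' x / b t x)) t := by
  refine HasDerivAt.fun_sum fun x _ => ?_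
  have hax := (ha₀ x).ne'
  have hbx := (hb₀ x).ne'
  have hlog := ((ha x).div (hb x) hbx).log (div_ne_zero hax hbx)
  simp only [Pi.div_apply] at hlog
  refine ((ha x).mul hlog).congr_deriv ?_
  field_simp
  ring

section EntropyProduction

variable {ι : Type*} [Fintype ι]

theorem sum_vecMul_eq_zero {G : Matrix ι ι ℝ} (hG : ∀ x, ∑ y, G x y = 0) (v : ι → ℝ) :
    ∑ x, (v ᵥ* G) x = 0 := by
  simp only [Matrix.vecMul, dotProduct]
  rw [sum_comm]
  simp [← mul_sum, hG]

variable [DecidableEq ι]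

noncomputable def entropyProduction (G : Matrix ι ι ℝ) (a b : ι → ℝ) : ℝ :=
  ∑ x, ∑ y ∈ univ.filter (fun y => y ≠ x),
    ell (a y * b x / (a x * b y)) * (a x * (b y / b x) * G y x)

theorem entropyProduction_nonneg {G : Matrix ι ι ℝ} (hG : ∀ x y, x ≠ y → 0 ≤ G x y)
    {a b : ι → ℝ} (ha : ∀ x, 0 < a x) (hb : ∀ x, 0 < b x) : 0 ≤ entropyProduction G a b := by
  refine sum_nonneg fun x _ => sum_nonneg fun y hy => mul_nonneg ?_ ?_
  · have := ha x; have := ha y; have := hb x; have := hb y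
    exact ell_nonneg (by positivity)
  · have := ha x; have := hb x; have := hb y
    exact mul_nonneg (by positivity) (hG y x (mem_filter.1 hy).2)

theorem sum_vecMul_mul_log_div_eq {G : Matrix ι ι ℝ} (hG : ∀ x, ∑ y, G x y = 0)
    {a b : ι → ℝ} (ha : ∀ x, 0 < a x) (hb : ∀ x, 0 < b x) :
    ∑ x, ((a ᵥ* G) x * log (a x / b x) + (a ᵥ* G) x - a x * (b ᵥ* G) x / b x) =
      -entropyProduction G a b := by
  have hterm : ∀ x, ∑ y ∈ univ.filter (fun y => y ≠ x),
      ell (a y * b x / (a x * b y)) * (a x * (b y / b x) * G y x) =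
        ((fun y => a y * log (a y / b y)) ᵥ* G) x - (a ᵥ* G) x * log (a x / b x) -
          (a ᵥ* G) x + a x * (b ᵥ* G) x / b x := by
    intro x
    rw [sum_filter_of_ne]
    swap
    · rintro y - hy rfl
      simp [div_self (mul_pos (ha y) (hb y)).ne', ell_one] at hy
    simp only [Matrix.vecMul, dotProduct, sum_mul, mul_sum, sum_div, ← sum_sub_distrib,
      ← sum_add_distrib]
    refine sum_congr rfl fun y _ => ?_
    rw [← mul_assoc, ell_mul_eq (ha x) (ha y) (hb x) (hb y)]
    ring
  rw [entropyProduction, sum_congr rfl fun x _ => hterm x]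
  simp only [sum_add_distrib, sum_sub_distrib, sum_vecMul_eq_zero hG]
  ring

end EntropyProduction

theorem relative_entropy_descent_general
    (d : ℕ) (G : Matrix (Fin d) (Fin d) ℝ)
    (hG : IsRateMatrix G) (hGirr : IsIrreducibleRateMatrix G)
    (p q : ℝ → Fin d → ℝ)
    (hp : SolvesForwardEquation G p) (hq : SolvesForwardEquation G q) :
    ∀ t : ℝ, 0 < t →
      (∀ x, 0 < p t x) ∧ (∀ x, 0 < q t x) ∧
      HasDerivAt (fun s => relEnt (p s) (q s))
        (-∑ x, ∑ y ∈ Finset.univ.filter (fun y => y ≠ x),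
            ell (p t y * q t x / (p t x * q t y)) *
              (p t x * (q t y / q t x) * G y x)) t ∧
      (-∑ x, ∑ y ∈ Finset.univ.filter (fun y => y ≠ x),
          ell (p t y * q t x / (p t x * q t y)) *
            (p t x * (q t y / q t x) * G y x)) ≤ 0 := by
  intro t ht
  have hpt : ∀ x, 0 < p t x := hp.pos hG hGirr ht
  have hqt : ∀ x, 0 < q t x := hq.pos hG hGirr ht
  refine ⟨hpt, hqt, ?_, neg_nonpos.2 (entropyProduction_nonneg hG.1 hpt hqt)⟩
  exact (hasDerivAt_relEnt (hp.2 t ht.le) (hq.2 t ht.le) hpt hqt).congr_deriv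
    (sum_vecMul_mul_log_div_eq hG.2 hpt hqt)

theorem relative_entropy_descent
    (d : ℕ) (hd : 2 ≤ d) (G : Matrix (Fin d) (Fin d) ℝ)
    (hG : IsRateMatrix G) (hGirr : IsIrreducibleRateMatrix G)
    (p q : ℝ → Fin d → ℝ)
    (hp : SolvesForwardEquation G p) (hq : SolvesForwardEquation G q) :
    ∀ t : ℝ, 0 < t →
      (∀ x, 0 < p t x) ∧ (∀ x, 0 < q t x) ∧
      HasDerivAt (fun s => relEnt (p s) (q s))
        (-∑ x, ∑ y ∈ Finset.univ.filter (fun y => y ≠ x),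
            ell (p t y * q t x / (p t x * q t y)) *
              (p t x * (q t y / q t x) * G y x)) t ∧
      (-∑ x, ∑ y ∈ Finset.univ.filter (fun y => y ≠ x),
          ell (p t y * q t x / (p t x * q t y)) *
            (p t x * (q t y / q t x) * G y x)) ≤ 0 :=
  relative_entropy_descent_general d G hG hGirr p q hp hq
end

section
/- Let K : 𝒳 × ℝ^d → ℝ be such that K(x,·) is twice continuously differentiable for each x ∈ 𝒳. Then there exists a constant C < ∞ such that for every N ∈ ℕ and all x, y ∈ 𝒳^N that differ in exactly one coordinate l ∈ {1,…,N}, | U_N(y) − U_N(x) − Ψ(x_l, y_l, r^N(x)) | ≤ C/N, where Ψ(x,y,p) = H^y(p) − H^x(p). -/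
open scoped BigOperators

/-- Empirical measure of a configuration `x ∈ 𝒳^N`, as a vector in `ℝ^d`:
`r^N_y(x) = (1/N) ∑_i 1_{x_i = y}`. -/
noncomputable def empMeasure {d N : ℕ} (x : Fin N → Fin d) : Fin d → ℝ :=
  fun y => (1 / (N : ℝ)) * ∑ i, if x i = y then 1 else 0

/-- The `N`-particle energy `U_N(x) = ∑_i K(x_i, r^N(x))`. -/
noncomputable def energyU {d N : ℕ} (K : Fin d → (Fin d → ℝ) → ℝ)
    (x : Fin N → Fin d) : ℝ :=
  ∑ i, K (x i) (empMeasure x)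

/-- `H^x(p) = K^x(p) + ∑_z (∂K^z/∂p_x)(p) · p_z`. -/
noncomputable def gibbsH {d : ℕ} (K : Fin d → (Fin d → ℝ) → ℝ)
    (x : Fin d) (p : Fin d → ℝ) : ℝ :=
  K x p + ∑ z, (fderiv ℝ (K z) p (Pi.single x 1)) * p z

/-- `Ψ(x,y,p) = H^y(p) - H^x(p)`. -/
noncomputable def gibbsPsi {d : ℕ} (K : Fin d → (Fin d → ℝ) → ℝ)
    (x y : Fin d) (p : Fin d → ℝ) : ℝ :=
  gibbsH K y p - gibbsH K x p

/-! Moving particle `l` shifts the empirical measure by `q - p = (e_{y_l} - e_{x_l}) / N`.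
The energy difference is then a first-order Taylor expansion of every `K^{x_i}` from `p` to `q`
plus the change `K^{y_l}(q) - K^{x_l}(q)`. Since `N p_z` counts the particles at `z`, the linear
part `∑_i DK^{x_i}(p)(q - p)` equals `∑_z DK^z(p)(e_{y_l} - e_{x_l}) p_z`, which together with
`K^{y_l}(p) - K^{x_l}(p)` is `Ψ`. On the unit ball, which contains every empirical measure,
`K` and `DK` are uniformly Lipschitz, so the `N` Taylor remainders contribute `N · O(N⁻²)` and
moving `K^{y_l}, K^{x_l}` from `q` back to `p` costs `O(1 / N)`. -/

open Metric Finset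
open scoped NNReal

theorem Convex.norm_image_sub_sub_fderiv_le_of_lipschitzOnWith
    {E F : Type*} [NormedAddCommGroup E] [NormedSpace ℝ E]
    [NormedAddCommGroup F] [NormedSpace ℝ F] {s : Set E} (hs : Convex ℝ s) {f : E → F}
    (hf : ∀ z ∈ s, DifferentiableAt ℝ f z) {M : ℝ≥0}
    (hf' : LipschitzOnWith M (fderiv ℝ f) s) {p q : E} (hp : p ∈ s) (hq : q ∈ s) :
    ‖f q - f p - fderiv ℝ f p (q - p)‖ ≤ M * ‖q - p‖ ^ 2 := by
  have hseg : segment ℝ p q ⊆ s := hs.segment_subset hp hq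
  have bound : ∀ z ∈ segment ℝ p q, ‖fderiv ℝ f z - fderiv ℝ f p‖ ≤ M * ‖q - p‖ := fun z hz =>
    hf'.norm_sub_le_of_le (hseg hz) hp (norm_sub_le_of_mem_segment hz)
  calc ‖f q - f p - fderiv ℝ f p (q - p)‖ ≤ M * ‖q - p‖ * ‖q - p‖ :=
        (convex_segment p q).norm_image_sub_le_of_norm_fderiv_le' (fun z hz => hf z (hseg hz))
          bound (left_mem_segment ℝ p q) (right_mem_segment ℝ p q)
    _ = M * ‖q - p‖ ^ 2 := by ring

theorem LipschitzOnWith.exists_forall_of_finite {ι α β : Type*} [Finite ι]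
    [PseudoEMetricSpace α] [PseudoEMetricSpace β] {f : ι → α → β} {s : Set α}
    (h : ∀ i, ∃ K, LipschitzOnWith K (f i) s) : ∃ K, ∀ i, LipschitzOnWith K (f i) s := by
  choose K hK using h
  have := Fintype.ofFinite ι
  exact ⟨univ.sup K, fun i => (hK i).weaken (le_sup (mem_univ i))⟩

theorem Fintype.sum_comp_sub_sum_comp_of_eq_off {ι α M : Type*} [Fintype ι] [AddCommGroup M]
    (f : α → M) {x y : ι → α} {l : ι} (h : ∀ j, j ≠ l → x j = y j) :
    ∑ i, f (y i) - ∑ i, f (x i) = f (y l) - f (x l) := by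
  rw [← sum_sub_distrib, sum_eq_single_of_mem l (mem_univ l)]
  intro j _ hj
  rw [h j hj, sub_self]

section EmpiricalMeasure

variable {d N : ℕ}

theorem empMeasure_mem_closedBall (x : Fin N → Fin d) :
    empMeasure x ∈ closedBall (0 : Fin d → ℝ) 1 := by
  rw [mem_closedBall_zero_iff, pi_norm_le_iff_of_nonneg zero_le_one]
  intro z
  have hcount : ∑ i, (if x i = z then (1 : ℝ) else 0) ≤ N := by
    simpa using sum_le_card_nsmul univ (fun i => if x i = z then (1 : ℝ) else 0) 1
      (fun i _ => by split_ifs <;> norm_num)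
  rw [Real.norm_eq_abs, abs_of_nonneg (by unfold empMeasure; positivity), empMeasure]
  rcases N.eq_zero_or_pos with rfl | hN
  · simp
  · rw [one_div, inv_mul_le_iff₀ (by exact_mod_cast hN), mul_one]
    exact hcount

theorem empMeasure_sub_empMeasure_of_eq_off {x y : Fin N → Fin d} {l : Fin N}
    (h : ∀ j, j ≠ l → x j = y j) :
    empMeasure y - empMeasure x = (1 / (N : ℝ)) • (Pi.single (y l) 1 - Pi.single (x l) 1) := by
  funext z
  simp only [empMeasure, Pi.sub_apply, Pi.smul_apply, smul_eq_mul, ← mul_sub,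
    Fintype.sum_comp_sub_sum_comp_of_eq_off (fun a => if a = z then (1 : ℝ) else 0) h,
    Pi.single_apply, eq_comm (a := z)]

theorem norm_empMeasure_sub_empMeasure_le {x y : Fin N → Fin d} {l : Fin N}
    (h : ∀ j, j ≠ l → x j = y j) : ‖empMeasure y - empMeasure x‖ ≤ 1 / N := by
  have hsingle : ‖(Pi.single (y l) 1 - Pi.single (x l) 1 : Fin d → ℝ)‖ ≤ 1 := by
    refine (pi_norm_le_iff_of_nonneg zero_le_one).2 fun z => ?_
    simp only [Pi.sub_apply, Pi.single_apply]
    split_ifs <;> norm_num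
  rw [empMeasure_sub_empMeasure_of_eq_off h, norm_smul, Real.norm_of_nonneg (by positivity)]
  exact mul_le_of_le_one_right (by positivity) hsingle

theorem sum_mul_empMeasure (g : Fin d → ℝ) (x : Fin N → Fin d) :
    ∑ z, g z * empMeasure x z = (1 / N) * ∑ i, g (x i) := by
  simp only [empMeasure, mul_sum, mul_ite, mul_one, mul_zero]
  rw [sum_comm]
  simp [mul_comm]

end EmpiricalMeasure

section Energy

variable {d N : ℕ} (K : Fin d → (Fin d → ℝ) → ℝ)

theorem gibbsPsi_eq_add_sum_fderiv (a b : Fin d) (p : Fin d → ℝ) :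
    gibbsPsi K a b p =
      K b p - K a p + ∑ z, fderiv ℝ (K z) p (Pi.single b 1 - Pi.single a 1) * p z := by
  simp only [gibbsPsi, gibbsH, map_sub, sub_mul, sum_sub_distrib]
  ring

theorem gibbsPsi_empMeasure_eq {x y : Fin N → Fin d} {l : Fin N} (hN : N ≠ 0)
    (h : ∀ j, j ≠ l → x j = y j) :
    gibbsPsi K (x l) (y l) (empMeasure x) =
      K (y l) (empMeasure x) - K (x l) (empMeasure x) +
        ∑ i, fderiv ℝ (K (x i)) (empMeasure x) (empMeasure y - empMeasure x) := by
  have hN' : (N : ℝ) ≠ 0 := Nat.cast_ne_zero.2 hN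
  have hsingle : (Pi.single (y l) 1 - Pi.single (x l) 1 : Fin d → ℝ) =
      (N : ℝ) • (empMeasure y - empMeasure x) := by
    rw [empMeasure_sub_empMeasure_of_eq_off h, smul_smul, mul_one_div_cancel hN', one_smul]
  rw [gibbsPsi_eq_add_sum_fderiv, hsingle, sum_mul_empMeasure (fun z => fderiv ℝ (K z) _ _)]
  simp only [map_smul, smul_eq_mul, ← mul_sum, ← mul_assoc, one_div_mul_cancel hN', one_mul]

theorem energyU_sub_energyU_sub_gibbsPsi_eq {x y : Fin N → Fin d} {l : Fin N} (hN : N ≠ 0)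
    (h : ∀ j, j ≠ l → x j = y j) :
    energyU K y - energyU K x - gibbsPsi K (x l) (y l) (empMeasure x) =
      ∑ i, (K (x i) (empMeasure y) - K (x i) (empMeasure x) -
          fderiv ℝ (K (x i)) (empMeasure x) (empMeasure y - empMeasure x)) +
        ((K (y l) (empMeasure y) - K (y l) (empMeasure x)) -
          (K (x l) (empMeasure y) - K (x l) (empMeasure x))) := by
  have hU : energyU K y - energyU K x =
      (∑ i, K (y i) (empMeasure y) - ∑ i, K (x i) (empMeasure y)) +
        ∑ i, (K (x i) (empMeasure y) - K (x i) (empMeasure x)) := by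
    simp only [energyU, sum_sub_distrib]
    ring
  rw [hU, Fintype.sum_comp_sub_sum_comp_of_eq_off (fun a => K a (empMeasure y)) h,
    gibbsPsi_empMeasure_eq K hN h]
  simp only [sum_sub_distrib]
  ring

theorem abs_energyU_sub_energyU_sub_gibbsPsi_le {L M : ℝ≥0}
    (hK : ∀ z, Differentiable ℝ (K z))
    (hL : ∀ z, LipschitzOnWith L (K z) (closedBall 0 1))
    (hM : ∀ z, LipschitzOnWith M (fderiv ℝ (K z)) (closedBall 0 1))
    {x y : Fin N → Fin d} {l : Fin N} (hN : N ≠ 0) (h : ∀ j, j ≠ l → x j = y j) :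
    |energyU K y - energyU K x - gibbsPsi K (x l) (y l) (empMeasure x)| ≤ (2 * L + M) / N := by
  set p := empMeasure x
  set q := empMeasure y
  have hp : p ∈ closedBall 0 1 := empMeasure_mem_closedBall x
  have hq : q ∈ closedBall 0 1 := empMeasure_mem_closedBall y
  have hqp : ‖q - p‖ ≤ 1 / N := norm_empMeasure_sub_empMeasure_le h
  have hlip : ∀ a, |K a q - K a p| ≤ L * (1 / N) := fun a =>
    (hL a).norm_sub_le_of_le hq hp hqp
  have htaylor : ∀ a, |K a q - K a p - fderiv ℝ (K a) p (q - p)| ≤ M * (1 / N) ^ 2 := fun a =>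
    ((convex_closedBall 0 1).norm_image_sub_sub_fderiv_le_of_lipschitzOnWith
      (fun z _ => (hK a).differentiableAt) (hM a) hp hq).trans (by gcongr)
  rw [energyU_sub_energyU_sub_gibbsPsi_eq K hN h]
  calc _ ≤ ∑ i, |K (x i) q - K (x i) p - fderiv ℝ (K (x i)) p (q - p)| +
        (|K (y l) q - K (y l) p| + |K (x l) q - K (x l) p|) :=
        (abs_add_le _ _).trans (add_le_add (abs_sum_le_sum_abs _ _) (abs_sub _ _))
    _ ≤ ∑ _i : Fin N, M * (1 / N : ℝ) ^ 2 + (L * (1 / N) + L * (1 / N)) := by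
        gcongr with i
        · exact htaylor _
        · exact hlip _
        · exact hlip _
    _ = (2 * L + M) / N := by
        rw [sum_const, card_univ, Fintype.card_fin, nsmul_eq_mul]
        field_simp
        ring

end Energy

theorem energy_difference_approximation_general
    (d : ℕ) (K : Fin d → (Fin d → ℝ) → ℝ)
    (hK : ∀ x : Fin d, ContDiff ℝ 2 (K x)) :
    ∃ C : ℝ, ∀ N : ℕ, 0 < N → ∀ x y : Fin N → Fin d, ∀ l : Fin N,
      x l ≠ y l → (∀ j : Fin N, j ≠ l → x j = y j) →
      |energyU K y - energyU K x - gibbsPsi K (x l) (y l) (empMeasure x)|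
        ≤ C / (N : ℝ) := by
  obtain ⟨L, hL⟩ := LipschitzOnWith.exists_forall_of_finite fun z =>
    (hK z).contDiffOn.exists_lipschitzOnWith two_ne_zero (convex_closedBall 0 1)
      (isCompact_closedBall 0 1)
  obtain ⟨M, hM⟩ := LipschitzOnWith.exists_forall_of_finite fun z =>
    ((hK z).fderiv_right le_rfl).contDiffOn.exists_lipschitzOnWith one_ne_zero
      (convex_closedBall 0 1) (isCompact_closedBall 0 1)
  exact ⟨2 * L + M, fun N hN x y l _ h => abs_energyU_sub_energyU_sub_gibbsPsi_le K
    (fun z => (hK z).differentiable two_ne_zero) hL hM hN.ne' h⟩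

/-- If `K(x,·)` is `C²` for each `x`, there is a constant `C < ∞` such that for
every `N` and all configurations `x, y ∈ 𝒳^N` differing in exactly one
coordinate `l`, `|U_N(y) - U_N(x) - Ψ(x_l, y_l, r^N(x))| ≤ C / N`. -/
theorem energy_difference_approximation
    (d : ℕ) (hd : 2 ≤ d) (K : Fin d → (Fin d → ℝ) → ℝ)
    (hK : ∀ x : Fin d, ContDiff ℝ 2 (K x)) :
    ∃ C : ℝ, ∀ N : ℕ, 0 < N → ∀ x y : Fin N → Fin d, ∀ l : Fin N,
      x l ≠ y l → (∀ j : Fin N, j ≠ l → x j = y j) →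
      |energyU K y - energyU K x - gibbsPsi K (x l) (y l) (empMeasure x)|
        ≤ C / (N : ℝ) :=
  energy_difference_approximation_general d K hK
end

section
/- Let K : 𝒳 × ℝ^d → ℝ with K(x,·) continuous for each x ∈ 𝒳, and let Z_N = Σ_{x∈𝒳^N} exp(−Σ_{i=1}^N K(x_i, r^N(x))). Then lim_{N→∞} (1/N) log Z_N = − inf_{q ∈ 𝒫(𝒳)} { Σ_{x∈𝒳} q_x log q_x + Σ_{x∈𝒳} K(x,q) q_x }, where the infimum is finite. Equivalently, with ν the uniform measure on 𝒳 and Φ(q) = Σ_x K(x,q) q_x, the limit equals −inf_{q∈𝒫(𝒳)} {R(q‖ν) + Φ(q)} + log|𝒳|. -/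
/-!
Since `U_N(x) = N Φ(r^N(x))`, the sum defining `Z_N` only depends on the type `r^N(x)`. There are
at most `(N+1)^d` types, and a type class `T_r` satisfies `|T_r| ≤ exp(-N ∑ r log r)` because it
has probability at most one under `r^N`. This gives `Z_N ≤ (N+1)^d exp(-N inf F)` with
`F(q) = ∑ q log q + Φ(q)`. For the lower bound, take `q` in the interior of the simplex with
`F(q)` close to `inf F` and rewrite `Z_N` as an expectation under `q^N`: by the same counting and
the strict Gibbs inequality, `q^N` gives exponentially small mass to configurations whose type is
far from `q`, and on the remaining ones the integrand is at least `exp(-N(F(q) + ε))`.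
-/

open scoped BigOperators
open Filter

/-- The partition function `Z_N = ∑_{x ∈ 𝒳^N} exp(−U_N(x))`. -/
noncomputable def partitionZ (d : ℕ) (K : Fin d → (Fin d → ℝ) → ℝ) (N : ℕ) : ℝ :=
  ∑ x : Fin N → Fin d, Real.exp (-(energyU K x))

open Real Finset Topology InformationTheory

section Entropy

variable {ι : Type*} [Fintype ι]

/-- `Real.log 0 = 0` builds in the convention `0 log 0 = 0`. -/
noncomputable def negEntropy (p : ι → ℝ) : ℝ := ∑ y, p y * log (p y)

noncomputable def negCrossEntropy (p q : ι → ℝ) : ℝ := ∑ y, p y * log (q y)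

lemma continuous_negEntropy : Continuous (negEntropy : (ι → ℝ) → ℝ) :=
  continuous_finsetSum _ fun y _ => continuous_mul_log.comp (continuous_apply y)

lemma continuous_negCrossEntropy_left (q : ι → ℝ) :
    Continuous fun p : ι → ℝ => negCrossEntropy p q :=
  continuous_finsetSum _ fun y _ => (continuous_apply y).mul continuous_const

lemma mul_klFun_div {p q : ℝ} (hp : 0 ≤ p) (hq : 0 < q) :
    q * klFun (p / q) = p * log p - p * log q + q - p := by
  rcases hp.eq_or_lt with rfl | hp
  · simp [klFun_zero]
  · rw [klFun_apply, log_div hp.ne' hq.ne']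
    field_simp

lemma negEntropy_sub_negCrossEntropy {p q : ι → ℝ} (hp : p ∈ stdSimplex ℝ ι)
    (hq : q ∈ stdSimplex ℝ ι) (hq_pos : ∀ y, 0 < q y) :
    negEntropy p - negCrossEntropy p q = ∑ y, q y * klFun (p y / q y) := by
  have hsum : ∑ y, (q y - p y) = 0 := by rw [sum_sub_distrib, hp.2, hq.2, sub_self]
  calc negEntropy p - negCrossEntropy p q
      = ∑ y, q y * klFun (p y / q y) - ∑ y, (q y - p y) := by
        simp only [negEntropy, negCrossEntropy, mul_klFun_div (hp.1 _) (hq_pos _),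
          ← sum_sub_distrib]
        exact sum_congr rfl fun y _ => by ring
    _ = _ := by rw [hsum, sub_zero]

lemma negCrossEntropy_lt_negEntropy {p q : ι → ℝ} (hp : p ∈ stdSimplex ℝ ι)
    (hq : q ∈ stdSimplex ℝ ι) (hq_pos : ∀ y, 0 < q y) (hne : p ≠ q) :
    negCrossEntropy p q < negEntropy p := by
  obtain ⟨y, hy⟩ := Function.ne_iff.1 hne
  have hdiv : p y / q y ≠ 1 := fun h => hy ((div_eq_one_iff_eq (hq_pos y).ne').1 h)
  rw [← sub_pos, negEntropy_sub_negCrossEntropy hp hq hq_pos]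
  refine sum_pos' (fun z _ => mul_nonneg (hq_pos z).le (klFun_nonneg ?_)) ⟨y, mem_univ y, ?_⟩
  · exact div_nonneg (hp.1 z) (hq_pos z).le
  · have h0 : 0 ≤ p y / q y := div_nonneg (hp.1 y) (hq_pos y).le
    have hkl : klFun (p y / q y) ≠ 0 := mt (klFun_eq_zero_iff h0).1 hdiv
    exact mul_pos (hq_pos y) ((klFun_nonneg h0).lt_of_ne hkl.symm)

lemma exists_pos_le_negEntropy_sub_negCrossEntropy {q : ι → ℝ} (hq : q ∈ stdSimplex ℝ ι)
    (hq_pos : ∀ y, 0 < q y) {δ : ℝ} (hδ : 0 < δ) :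
    ∃ c > 0, ∀ p ∈ stdSimplex ℝ ι, δ ≤ dist p q → c ≤ negEntropy p - negCrossEntropy p q := by
  set T := stdSimplex ℝ ι ∩ {p | δ ≤ dist p q}
  rcases T.eq_empty_or_nonempty with hT | hT
  · exact ⟨1, one_pos, fun p hp hpq => (Set.eq_empty_iff_forall_notMem.1 hT p ⟨hp, hpq⟩).elim⟩
  have hT_compact : IsCompact T := (isCompact_stdSimplex ℝ ι).inter_right
    (isClosed_le continuous_const (continuous_id.dist continuous_const))
  obtain ⟨p₀, ⟨hp₀, hp₀q⟩, hmin⟩ := hT_compact.exists_isMinOn hT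
    (continuous_negEntropy.sub (continuous_negCrossEntropy_left q)).continuousOn
  have hne : p₀ ≠ q := by
    intro h
    have : δ ≤ dist p₀ q := hp₀q
    rw [h, dist_self] at this
    linarith
  exact ⟨_, sub_pos.2 (negCrossEntropy_lt_negEntropy hp₀ hq hq_pos hne),
    fun p hp hpq => hmin (⟨hp, hpq⟩ : p ∈ T)⟩

lemma exists_pos_mem_stdSimplex_lt {F : (ι → ℝ) → ℝ} (hF : Continuous F) {q₀ : ι → ℝ}
    (hq₀ : q₀ ∈ stdSimplex ℝ ι) {ε : ℝ} (hε : 0 < ε) :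
    ∃ q ∈ stdSimplex ℝ ι, (∀ y, 0 < q y) ∧ F q < F q₀ + ε := by
  have hcard : (0 : ℝ) < Fintype.card ι := by
    obtain ⟨y, -⟩ := Finset.nonempty_of_sum_ne_zero (hq₀.2.trans_ne one_ne_zero)
    exact_mod_cast Fintype.card_pos_iff.2 ⟨y⟩
  set u : ι → ℝ := fun _ => (Fintype.card ι : ℝ)⁻¹
  have hu : u ∈ stdSimplex ℝ ι :=
    ⟨fun _ => by positivity, by simp [u, card_univ, mul_inv_cancel₀ hcard.ne']⟩
  set path : ℝ → ι → ℝ := fun θ => (1 - θ) • q₀ + θ • u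
  have hpath : Tendsto (fun θ => F (path θ)) (𝓝[>] 0) (𝓝 (F q₀)) := by
    have hcont : Continuous fun θ => F (path θ) := hF.comp (by fun_prop)
    have h0 : path 0 = q₀ := by simp [path]
    exact h0 ▸ (hcont.tendsto 0).mono_left nhdsWithin_le_nhds
  obtain ⟨θ, hθ_lt, hθ⟩ := ((hpath.eventually (gt_mem_nhds (lt_add_of_pos_right _ hε))).and
    (Ioo_mem_nhdsGT one_pos)).exists
  refine ⟨path θ, convex_stdSimplex ℝ ι hq₀ hu (by linarith [hθ.2]) hθ.1.le (by ring),
    fun y => ?_, hθ_lt⟩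
  have : 0 ≤ (1 - θ) * q₀ y := mul_nonneg (by linarith [hθ.2]) (hq₀.1 y)
  simp only [path, Pi.add_apply, Pi.smul_apply, smul_eq_mul, u]
  have : 0 < θ * (Fintype.card ι : ℝ)⁻¹ := mul_pos hθ.1 (by positivity)
  linarith

lemma sum_mul_log_div_const {q : ι → ℝ} (hq : q ∈ stdSimplex ℝ ι) {c : ℝ} (hc : c ≠ 0) :
    ∑ x, q x * log (q x / c) = negEntropy q - log c := by
  have h : ∀ x, q x * log (q x / c) = q x * log (q x) - q x * log c := fun x => by
    rcases (hq.1 x).eq_or_lt with h | h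
    · simp [← h]
    · rw [log_div h.ne' hc, mul_sub]
  rw [Finset.sum_congr rfl fun x _ => h x, sum_sub_distrib, ← sum_mul, hq.2, one_mul]
  rfl

end Entropy

section Types

variable {d N : ℕ}

lemma natCast_mul_empMeasure (x : Fin N → Fin d) (y : Fin d) :
    (N : ℝ) * empMeasure x y = #{i | x i = y} := by
  rcases eq_or_ne N 0 with rfl | hN
  · simp
  · simp [empMeasure, sum_boole, hN]

lemma empMeasure_nonneg (x : Fin N → Fin d) (y : Fin d) : 0 ≤ empMeasure x y := by
  unfold empMeasure
  positivity

lemma empMeasure_mem_stdSimplex (hN : N ≠ 0) (x : Fin N → Fin d) :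
    empMeasure x ∈ stdSimplex ℝ (Fin d) := by
  refine ⟨empMeasure_nonneg x, ?_⟩
  have h := congrArg (fun t : ℕ => (t : ℝ)) (card_eq_sum_card_fiberwise (s := univ) (t := univ)
    (f := x) fun i _ => mem_univ (x i))
  simp only [card_univ, Fintype.card_fin, Nat.cast_sum, ← natCast_mul_empMeasure,
    ← mul_sum] at h
  exact (mul_right_inj' (Nat.cast_ne_zero.2 hN)).1 (by rw [← h, mul_one])

lemma sum_comp_eq_mul_sum_empMeasure (x : Fin N → Fin d) (f : Fin d → ℝ) :
    ∑ i, f (x i) = N * ∑ y, empMeasure x y * f y := by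
  rw [← sum_fiberwise univ x, mul_sum]
  refine sum_congr rfl fun y _ => ?_
  rw [← mul_assoc, natCast_mul_empMeasure, ← nsmul_eq_mul, ← sum_const]
  exact sum_congr rfl fun i hi => by rw [(mem_filter.1 hi).2]

lemma prod_comp_eq_exp_negCrossEntropy (x : Fin N → Fin d) {f : Fin d → ℝ}
    (hf : ∀ y, 0 < empMeasure x y → 0 < f y) :
    ∏ i, f (x i) = exp (N * negCrossEntropy (empMeasure x) f) := by
  rw [← prod_fiberwise univ x, negCrossEntropy, mul_sum, exp_sum]
  refine prod_congr rfl fun y _ => ?_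
  rcases (empMeasure_nonneg x y).eq_or_lt with h | h
  · have hcard : (#{i | x i = y} : ℝ) = 0 := by rw [← natCast_mul_empMeasure, ← h, mul_zero]
    rw [Nat.cast_eq_zero, card_eq_zero] at hcard
    rw [hcard, prod_empty, ← h, zero_mul, mul_zero, exp_zero]
  · rw [← mul_assoc, natCast_mul_empMeasure, exp_nat_mul, exp_log (hf y h), ← prod_const]
    exact prod_congr rfl fun i hi => by rw [(mem_filter.1 hi).2]

lemma card_image_empMeasure_le :
    #(univ.image (empMeasure : (Fin N → Fin d) → Fin d → ℝ)) ≤ (N + 1) ^ d := by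
  have hsub : univ.image (empMeasure : (Fin N → Fin d) → Fin d → ℝ) ⊆
      univ.image fun (t : Fin d → Fin (N + 1)) y => (1 / (N : ℝ)) * t y := by
    intro p hp
    obtain ⟨x, -, rfl⟩ := mem_image.1 hp
    have hcard (y : Fin d) : #{i | x i = y} < N + 1 :=
      Nat.lt_succ_of_le ((card_filter_le _ _).trans (by simp))
    refine mem_image.2 ⟨fun y => ⟨#{i | x i = y}, hcard y⟩, mem_univ _, ?_⟩
    ext y
    simp [empMeasure, sum_boole]
  simpa using (card_le_card hsub).trans card_image_le

/-- Each type class has probability at most one under the i.i.d. law of its own type. -/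
lemma sum_exp_negEntropy_empMeasure_le (hN : N ≠ 0) :
    ∑ x : Fin N → Fin d, exp (N * negEntropy (empMeasure x)) ≤ (N + 1) ^ d := by
  calc ∑ x : Fin N → Fin d, exp (N * negEntropy (empMeasure x))
      = ∑ p ∈ univ.image empMeasure, ∑ x ∈ {x : Fin N → Fin d | empMeasure x = p},
          ∏ i, p (x i) := by
        rw [← sum_fiberwise_of_maps_to (g := empMeasure) fun x _ => mem_image_of_mem _ (mem_univ x)]
        refine sum_congr rfl fun p _ => sum_congr rfl fun x hx => ?_
        rw [← (mem_filter.1 hx).2, prod_comp_eq_exp_negCrossEntropy x fun _ h => h]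
        rfl
    _ ≤ ∑ p ∈ univ.image (empMeasure : (Fin N → Fin d) → Fin d → ℝ), 1 := by
        refine sum_le_sum fun p hp => ?_
        obtain ⟨x₀, -, rfl⟩ := mem_image.1 hp
        calc ∑ x ∈ {x : Fin N → Fin d | empMeasure x = empMeasure x₀}, ∏ i, empMeasure x₀ (x i)
            ≤ ∑ x : Fin N → Fin d, ∏ i, empMeasure x₀ (x i) :=
              sum_le_sum_of_subset_of_nonneg (filter_subset _ _)
                fun x _ _ => prod_nonneg fun i _ => empMeasure_nonneg x₀ (x i)
          _ = 1 := by rw [← Fintype.sum_pow, (empMeasure_mem_stdSimplex hN x₀).2, one_pow]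
    _ ≤ (N + 1) ^ d := by
        rw [sum_const, nsmul_one]
        exact_mod_cast card_image_empMeasure_le

end Types

section PartitionFunction

variable {ι : Type*} [Fintype ι]

noncomputable def interactionEnergy (K : ι → (ι → ℝ) → ℝ) (q : ι → ℝ) : ℝ := ∑ x, K x q * q x

noncomputable def freeEnergy (K : ι → (ι → ℝ) → ℝ) (q : ι → ℝ) : ℝ :=
  negEntropy q + interactionEnergy K q

lemma continuous_interactionEnergy {K : ι → (ι → ℝ) → ℝ} (hK : ∀ x, Continuous (K x)) :
    Continuous (interactionEnergy K) :=
  continuous_finsetSum _ fun x _ => (hK x).mul (continuous_apply x)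

lemma continuous_freeEnergy {K : ι → (ι → ℝ) → ℝ} (hK : ∀ x, Continuous (K x)) :
    Continuous (freeEnergy K) :=
  continuous_negEntropy.add (continuous_interactionEnergy hK)

variable {d N : ℕ} {K : Fin d → (Fin d → ℝ) → ℝ}

lemma energyU_eq (x : Fin N → Fin d) : energyU K x = N * interactionEnergy K (empMeasure x) := by
  simp only [energyU, interactionEnergy,
    sum_comp_eq_mul_sum_empMeasure x fun y => K y (empMeasure x), mul_comm]

lemma partitionZ_pos [NeZero d] : 0 < partitionZ d K N :=
  sum_pos (fun _ _ => exp_pos _) univ_nonempty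

lemma partitionZ_le (hN : N ≠ 0) {m : ℝ} (hm : ∀ p ∈ stdSimplex ℝ (Fin d), m ≤ freeEnergy K p) :
    partitionZ d K N ≤ (N + 1) ^ d * exp (-(N * m)) := by
  calc partitionZ d K N
      ≤ ∑ x : Fin N → Fin d, exp (N * negEntropy (empMeasure x)) * exp (-(N * m)) := by
        refine sum_le_sum fun x _ => ?_
        rw [← exp_add, exp_le_exp, energyU_eq]
        have := mul_le_mul_of_nonneg_left (hm _ (empMeasure_mem_stdSimplex hN x)) N.cast_nonneg
        rw [freeEnergy] at this
        linarith
    _ ≤ (N + 1) ^ d * exp (-(N * m)) := by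
        rw [← sum_mul]
        exact mul_le_mul_of_nonneg_right (sum_exp_negEntropy_empMeasure_le hN) (exp_pos _).le

lemma sum_prod_le_of_le_dist (hN : N ≠ 0) {q : Fin d → ℝ} (hq_pos : ∀ y, 0 < q y) {δ c : ℝ}
    (hfar : ∀ p ∈ stdSimplex ℝ (Fin d), δ ≤ dist p q → c ≤ negEntropy p - negCrossEntropy p q) :
    ∑ x : Fin N → Fin d with δ ≤ dist (empMeasure x) q, ∏ i, q (x i) ≤
      (N + 1) ^ d * exp (-(N * c)) := by
  calc ∑ x : Fin N → Fin d with δ ≤ dist (empMeasure x) q, ∏ i, q (x i)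
      ≤ ∑ x : Fin N → Fin d with δ ≤ dist (empMeasure x) q,
          exp (N * negEntropy (empMeasure x)) * exp (-(N * c)) := by
        refine sum_le_sum fun x hx => ?_
        rw [prod_comp_eq_exp_negCrossEntropy x fun y _ => hq_pos y, ← exp_add, exp_le_exp]
        have := mul_le_mul_of_nonneg_left
          (hfar _ (empMeasure_mem_stdSimplex hN x) (mem_filter.1 hx).2) N.cast_nonneg
        linarith
    _ ≤ ∑ x : Fin N → Fin d, exp (N * negEntropy (empMeasure x)) * exp (-(N * c)) :=
        sum_le_sum_of_subset_of_nonneg (filter_subset _ _) fun _ _ _ => by positivity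
    _ ≤ (N + 1) ^ d * exp (-(N * c)) := by
        rw [← sum_mul]
        exact mul_le_mul_of_nonneg_right (sum_exp_negEntropy_empMeasure_le hN) (exp_pos _).le

/-- Change of measure to the i.i.d. law `q^N`, which concentrates where `empMeasure x` is near
`q`. -/
lemma partitionZ_ge (hN : N ≠ 0) {q : Fin d → ℝ} (hq : q ∈ stdSimplex ℝ (Fin d))
    (hq_pos : ∀ y, 0 < q y) {δ c A : ℝ}
    (hfar : ∀ p ∈ stdSimplex ℝ (Fin d), δ ≤ dist p q → c ≤ negEntropy p - negCrossEntropy p q)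
    (hnear : ∀ p ∈ stdSimplex ℝ (Fin d), dist p q < δ →
      interactionEnergy K p + negCrossEntropy p q ≤ A) :
    (1 - (N + 1) ^ d * exp (-(N * c))) * exp (-(N * A)) ≤ partitionZ d K N := by
  have htotal : ∑ x : Fin N → Fin d with ¬δ ≤ dist (empMeasure x) q, ∏ i, q (x i) +
      ∑ x : Fin N → Fin d with δ ≤ dist (empMeasure x) q, ∏ i, q (x i) = 1 := by
    rw [add_comm, sum_filter_add_sum_filter_not, ← Fintype.sum_pow, hq.2, one_pow]
  calc (1 - (N + 1) ^ d * exp (-(N * c))) * exp (-(N * A))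
      ≤ (∑ x : Fin N → Fin d with ¬δ ≤ dist (empMeasure x) q, ∏ i, q (x i)) * exp (-(N * A)) := by
        gcongr
        linarith [sum_prod_le_of_le_dist hN hq_pos hfar]
    _ ≤ ∑ x : Fin N → Fin d with ¬δ ≤ dist (empMeasure x) q, exp (-energyU K x) := by
        rw [sum_mul]
        refine sum_le_sum fun x hx => ?_
        rw [prod_comp_eq_exp_negCrossEntropy x fun y _ => hq_pos y, ← exp_add, exp_le_exp,
          energyU_eq]
        have := mul_le_mul_of_nonneg_left (hnear _ (empMeasure_mem_stdSimplex hN x)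
          (not_le.1 (mem_filter.1 hx).2)) N.cast_nonneg
        linarith
    _ ≤ partitionZ d K N :=
        sum_le_sum_of_subset_of_nonneg (filter_subset _ _) fun _ _ _ => (exp_pos _).le

end PartitionFunction

lemma tendsto_log_add_one_div_atTop :
    Tendsto (fun n : ℕ => log (n + 1) / n) atTop (𝓝 0) := by
  have h := (tendsto_pow_log_div_mul_add_atTop 1 (-1) 1 one_ne_zero).comp
    (tendsto_atTop_add_const_right _ 1 tendsto_natCast_atTop_atTop)
  exact h.congr fun n => by simp

lemma tendsto_add_one_pow_mul_exp_neg_mul_atTop (d : ℕ) {c : ℝ} (hc : 0 < c) :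
    Tendsto (fun n : ℕ => ((n : ℝ) + 1) ^ d * exp (-(n * c))) atTop (𝓝 0) := by
  have hr : |exp (-c)| < 1 := by rw [abs_of_pos (exp_pos _), exp_lt_one_iff]; linarith
  have h := ((tendsto_add_atTop_iff_nat 1).2
    (tendsto_pow_const_mul_const_pow_of_abs_lt_one d hr)).const_mul (exp c)
  rw [mul_zero] at h
  refine h.congr fun n => ?_
  rw [← exp_nat_mul, ← mul_assoc, mul_comm (exp c), mul_assoc, ← exp_add]
  push_cast
  ring_nf

section Asymptotics

variable {d : ℕ} {K : Fin d → (Fin d → ℝ) → ℝ}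

lemma eventually_log_partitionZ_lt [NeZero d] {m : ℝ}
    (hm : ∀ p ∈ stdSimplex ℝ (Fin d), m ≤ freeEnergy K p) {a : ℝ} (ha : -m < a) :
    ∀ᶠ N : ℕ in atTop, 1 / (N : ℝ) * log (partitionZ d K N) < a := by
  have hlim := tendsto_log_add_one_div_atTop.const_mul (d : ℝ)
  rw [mul_zero] at hlim
  filter_upwards [eventually_ne_atTop 0, hlim.eventually (gt_mem_nhds (by linarith : 0 < a + m))]
    with N hN hlog
  have hN' : (0 : ℝ) < N := by positivity
  have hZ : log (partitionZ d K N) ≤ d * log (N + 1) - N * m := by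
    have := log_le_log partitionZ_pos (partitionZ_le hN hm)
    rwa [log_mul (by positivity) (exp_pos _).ne', log_pow, log_exp, ← sub_eq_add_neg] at this
  calc 1 / (N : ℝ) * log (partitionZ d K N) ≤ 1 / N * (d * log (N + 1) - N * m) := by gcongr
    _ = d * (log (N + 1) / N) - m := by field_simp
    _ < a := by linarith

lemma eventually_lt_log_partitionZ (hK : ∀ x, Continuous (K x)) {q : Fin d → ℝ}
    (hq : q ∈ stdSimplex ℝ (Fin d)) (hq_pos : ∀ y, 0 < q y) {a : ℝ}
    (ha : a < -freeEnergy K q) :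
    ∀ᶠ N : ℕ in atTop, a < 1 / (N : ℝ) * log (partitionZ d K N) := by
  set ε := (-freeEnergy K q - a) / 2
  have hε : 0 < ε := by simp only [ε]; linarith
  have hcont : Continuous fun p => interactionEnergy K p + negCrossEntropy p q :=
    (continuous_interactionEnergy hK).add (continuous_negCrossEntropy_left q)
  have hq_val : interactionEnergy K q + negCrossEntropy q q = freeEnergy K q := add_comm _ _
  obtain ⟨δ, hδ, hnear⟩ := Metric.eventually_nhds_iff.1
    ((hcont.tendsto q).eventually (gt_mem_nhds (lt_add_of_pos_right _ hε)))
  rw [hq_val] at hnear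
  obtain ⟨c, hc, hfar⟩ := exists_pos_le_negEntropy_sub_negCrossEntropy hq hq_pos hδ
  filter_upwards [eventually_ne_atTop 0,
    (tendsto_add_one_pow_mul_exp_neg_mul_atTop d hc).eventually (ge_mem_nhds one_half_pos),
    (tendsto_const_div_atTop_nhds_zero_nat (log 2)).eventually (gt_mem_nhds hε)]
    with N hN hsmall hlog2
  have hN' : (0 : ℝ) < N := by positivity
  have hZ : 1 / 2 * exp (-(N * (freeEnergy K q + ε))) ≤ partitionZ d K N := by
    refine le_trans ?_ (partitionZ_ge hN hq hq_pos hfar fun p _ hp => (hnear hp).le)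
    gcongr
    linarith
  have hlogZ : -log 2 - N * (freeEnergy K q + ε) ≤ log (partitionZ d K N) := by
    have := log_le_log (by positivity) hZ
    rwa [log_mul (by norm_num) (exp_pos _).ne', log_exp, one_div, log_inv, ← sub_eq_add_neg] at this
  calc a < -(log 2 / N) - (freeEnergy K q + ε) := by simp only [ε] at hlog2 ⊢; linarith
    _ = 1 / N * (-log 2 - N * (freeEnergy K q + ε)) := by field_simp
    _ ≤ 1 / (N : ℝ) * log (partitionZ d K N) := by gcongr

lemma tendsto_log_partitionZ [NeZero d] (hK : ∀ x, Continuous (K x)) {q₀ : Fin d → ℝ}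
    (hq₀ : q₀ ∈ stdSimplex ℝ (Fin d)) (hmin : IsMinOn (freeEnergy K) (stdSimplex ℝ (Fin d)) q₀) :
    Tendsto (fun N : ℕ => 1 / (N : ℝ) * log (partitionZ d K N)) atTop
      (𝓝 (-freeEnergy K q₀)) := by
  refine tendsto_order.2 ⟨fun a ha => ?_, fun a ha => eventually_log_partitionZ_lt
    (fun p hp => hmin hp) ha⟩
  obtain ⟨q, hq, hq_pos, hlt⟩ :=
    exists_pos_mem_stdSimplex_lt (continuous_freeEnergy hK) hq₀ (sub_pos.2 ha)
  exact eventually_lt_log_partitionZ hK hq hq_pos (by linarith)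

end Asymptotics

lemma csInf_setOf_exists_eq {α : Type*} {s : Set α} {F : α → ℝ} {a : α} (ha : a ∈ s)
    (hmin : IsMinOn F s a) : sInf {v | ∃ q ∈ s, v = F q} = F a :=
  IsLeast.csInf_eq ⟨⟨a, ha, rfl⟩, by rintro v ⟨q, hq, rfl⟩; exact hmin hq⟩

/-- `lim_{N→∞} (1/N) log Z_N = − inf_{q ∈ 𝒫(𝒳)} {∑ q_x log q_x + ∑ K(x,q) q_x}`;
equivalently, with `ν` uniform on `𝒳` and `Φ(q) = ∑ K(x,q) q_x`, the limit is
`− inf_q {R(q‖ν) + Φ(q)} + log |𝒳|`. -/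
theorem partition_function_limit
    (d : ℕ) (hd : 2 ≤ d)
    (K : Fin d → (Fin d → ℝ) → ℝ)
    (hK : ∀ x : Fin d, Continuous (K x)) :
    Tendsto (fun N : ℕ => (1 / (N : ℝ)) * Real.log (partitionZ d K N)) atTop
      (nhds (-(sInf { v : ℝ | ∃ q ∈ stdSimplex ℝ (Fin d),
        v = ∑ x, q x * Real.log (q x) + ∑ x, K x q * q x }))) ∧
    (-(sInf { v : ℝ | ∃ q ∈ stdSimplex ℝ (Fin d),
        v = ∑ x, q x * Real.log (q x) + ∑ x, K x q * q x }))
      = -(sInf { v : ℝ | ∃ q ∈ stdSimplex ℝ (Fin d),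
          v = (∑ x, q x * Real.log (q x / ((d : ℝ)⁻¹)))
            + ∑ x, K x q * q x }) + Real.log d := by
  have : NeZero d := ⟨by omega⟩
  obtain ⟨q₀, hq₀, hmin⟩ := (isCompact_stdSimplex ℝ (Fin d)).exists_isMinOn
    ⟨_, single_mem_stdSimplex ℝ 0⟩ (continuous_freeEnergy hK).continuousOn
  have hshift : ∀ q ∈ stdSimplex ℝ (Fin d),
      (∑ x, q x * log (q x / ((d : ℝ)⁻¹))) + ∑ x, K x q * q x = freeEnergy K q + log d :=
    fun q hq => by
      rw [sum_mul_log_div_const hq (inv_ne_zero (NeZero.ne _)), log_inv, freeEnergy,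
        interactionEnergy]
      ring
  have hmin_rel : IsMinOn (fun q => (∑ x, q x * log (q x / ((d : ℝ)⁻¹))) + ∑ x, K x q * q x)
      (stdSimplex ℝ (Fin d)) q₀ := fun q hq => by
    simp only [Set.mem_ofPred_eq, hshift q hq, hshift q₀ hq₀, add_le_add_iff_right]
    exact hmin hq
  -- `rw` sees `freeEnergy K` only up to unfolding, so the integrand is spelt out
  rw [csInf_setOf_exists_eq (F := fun q => ∑ x, q x * log (q x) + ∑ x, K x q * q x) hq₀ hmin,
    csInf_setOf_exists_eq hq₀ hmin_rel, hshift q₀ hq₀]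
  refine ⟨tendsto_log_partitionZ hK hq₀ hmin, ?_⟩
  change -freeEnergy K q₀ = _
  ring
end
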